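/- arXiv:1711.09294 — 3 statements merged into one kernel-verified Lean document; each statement's English description precedes it below -/
import Mathlib

section
/- Approximation error of exact-value Lagrange interpolation: if g* ∈ Σ(λ, α) with α > 1 and P_{q̃}(x̃) = Σ_{ã: M^{−1}ã ∈ I_{q̃}} g*(M^{−1}ã)Q_{q̃,ã}(x̃), then for all x̃ ∈ I_{q̃}, |P_{q̃}(x̃) − g*(x̃)| ≤ 2⌈α⌉^{d⌈α⌉} λ M^{−α}. -/
open Finset

/-- The largest integer strictly smaller than `α` (for `α > 0`). -/
noncomputable def flr (α : ℝ) : ℕ := (⌈α⌉ - 1).toNat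

/-- `g` belongs to the Hölder class `Σ(λ, α)` on `[0,1]^m`, with `TP y k` the
degree-`k` Taylor polynomial of `g` at `y`. -/
def MemHolderSigma (m : ℕ) (lam α : ℝ) (g : (Fin m → ℝ) → ℝ)
    (TP : (Fin m → ℝ) → ℕ → (Fin m → ℝ) → ℝ) : Prop :=
  ContDiff ℝ (flr α : ℕ∞) g ∧
  ∀ x y : Fin m → ℝ,
    (∀ i, x i ∈ Set.Icc (0:ℝ) 1) → (∀ i, y i ∈ Set.Icc (0:ℝ) 1) →
    ∀ β : ℝ, 0 < β → β ≤ α →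
      |g x - TP y (flr β) x| ≤ lam * ‖x - y‖ ^ β

/-- The tensor-product Lagrange basis polynomial `Q_{q̃,ã}`. -/
noncomputable def lagQ (m k M : ℕ) (qt aa : Fin m → ℕ) (x : Fin m → ℝ) : ℝ :=
  ∏ i : Fin m, ∏ j ∈ (Finset.range (k + 1)).filter (fun j => j ≠ aa i - k * qt i),
    (x i - ((k * qt i + j : ℕ) : ℝ) / M) /
      ((aa i : ℝ) / M - ((k * qt i + j : ℕ) : ℝ) / M)

/-!
On the cell `I_{q̃}` (side `k/M`, `k = ⌊α⌋`), write `g* = T + r` with `T` the Taylor polynomial at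
the cell corner. Interpolation reproduces `T`, so the error is `∑ r(node) Q_node(x) - r(x)`. The
Hölder condition bounds `|r| ≤ λ (k/M)^α` on the cell, and each one-dimensional Lagrange factor
`(x - c)/(a - c)` is at most `k` in absolute value, because `|x - c| ≤ k/M` while distinct nodes
are `1/M` apart. Summing over the `(k+1)^{d-1}` nodes gives the constant.
-/

lemma flr_add_one {α : ℝ} (hα : 0 < α) : flr α + 1 = ⌈α⌉₊ := by
  have : 1 ≤ ⌈α⌉ := Int.one_le_ceil_iff.mpr hα
  rw [← Int.ceil_toNat, flr]
  omega

lemma one_le_flr {α : ℝ} (hα : 1 < α) : 1 ≤ flr α := by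
  have : 1 < ⌈α⌉ := Int.lt_ceil.mpr (by exact_mod_cast hα)
  rw [flr]
  omega

lemma le_flr_add_one (α : ℝ) : α ≤ flr α + 1 := by
  have h : ⌈α⌉ ≤ ((flr α + 1 : ℕ) : ℤ) := by rw [flr]; omega
  calc α ≤ ⌈α⌉ := Int.le_ceil α
    _ ≤ flr α + 1 := by exact_mod_cast h

lemma MemHolderSigma.abs_sub_taylor_le {m : ℕ} {lam α r : ℝ} {g : (Fin m → ℝ) → ℝ}
    {TP : (Fin m → ℝ) → ℕ → (Fin m → ℝ) → ℝ} (hg : MemHolderSigma m lam α g TP)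
    (hα : 0 < α) (hlam : 0 ≤ lam) {x y : Fin m → ℝ} (hx : ∀ i, x i ∈ Set.Icc (0 : ℝ) 1)
    (hy : ∀ i, y i ∈ Set.Icc (0 : ℝ) 1) (hxy : ‖x - y‖ ≤ r) :
    |g x - TP y (flr α) x| ≤ lam * r ^ α :=
  (hg.2 x y hx hy α hα le_rfl).trans <|
    mul_le_mul_of_nonneg_left (Real.rpow_le_rpow (norm_nonneg _) hxy hα.le) hlam

lemma abs_interpolation_sub_le {ι E : Type*} (s : Finset ι) (u : ι → E) (Q : ι → ℝ)
    (g p : E → ℝ) (x : E) (hrepro : ∑ a ∈ s, p (u a) * Q a = p x) {ε B : ℝ}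
    (hnodes : ∀ a ∈ s, |g (u a) - p (u a)| ≤ ε) (hx : |g x - p x| ≤ ε)
    (hQ : ∀ a ∈ s, |Q a| ≤ B) :
    |∑ a ∈ s, g (u a) * Q a - g x| ≤ (#s * B + 1) * ε := by
  have hε : 0 ≤ ε := (abs_nonneg _).trans hx
  have hsplit : ∑ a ∈ s, g (u a) * Q a - g x
      = ∑ a ∈ s, (g (u a) - p (u a)) * Q a - (g x - p x) := by
    rw [← hrepro]
    simp only [sub_mul, sum_sub_distrib]
    ring
  have hsum : |∑ a ∈ s, (g (u a) - p (u a)) * Q a| ≤ #s * (ε * B) := by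
    calc |∑ a ∈ s, (g (u a) - p (u a)) * Q a|
        ≤ ∑ a ∈ s, |(g (u a) - p (u a)) * Q a| := abs_sum_le_sum_abs _ _
      _ ≤ ∑ _a ∈ s, ε * B := sum_le_sum fun a ha => by
          rw [abs_mul]
          exact mul_le_mul (hnodes a ha) (hQ a ha) (abs_nonneg _) hε
      _ = #s * (ε * B) := by rw [sum_const, nsmul_eq_mul]
  rw [hsplit]
  calc _ ≤ |∑ a ∈ s, (g (u a) - p (u a)) * Q a| + |g x - p x| := abs_sub _ _
    _ ≤ #s * (ε * B) + ε := add_le_add hsum hx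
    _ = (#s * B + 1) * ε := by ring

section Cell

variable {m : ℕ} (k M : ℕ) (qt : Fin m → ℕ)

def lagCell : Set (Fin m → ℝ) :=
  {x | ∀ i, x i ∈ Set.Icc (((k * qt i : ℕ) : ℝ) / M) (((k * (qt i + 1) : ℕ) : ℝ) / M)}

noncomputable def cellCorner : Fin m → ℝ := fun i => ((k * qt i : ℕ) : ℝ) / M

def lagNodes : Finset (Fin m → ℕ) :=
  Fintype.piFinset fun i => Finset.Icc (k * qt i) (k * (qt i + 1))

lemma card_lagNodes : #(lagNodes k qt) = (k + 1) ^ m := by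
  have hcard : ∀ n, n + k + 1 - n = k + 1 := by omega
  simp only [lagNodes, Fintype.card_piFinset, Nat.card_Icc, Nat.mul_succ, hcard, prod_const,
    card_univ, Fintype.card_fin]

variable {k M qt}

lemma cellCorner_mem_lagCell : cellCorner k M qt ∈ lagCell k M qt := fun i =>
  ⟨le_rfl, by unfold cellCorner; gcongr; omega⟩

lemma node_mem_lagCell {aa : Fin m → ℕ} (ha : aa ∈ lagNodes k qt) :
    (fun i => (aa i : ℝ) / M) ∈ lagCell k M qt := fun i => by
  obtain ⟨h₁, h₂⟩ := Finset.mem_Icc.mp (Fintype.mem_piFinset.mp ha i)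
  exact ⟨div_le_div_of_nonneg_right (by exact_mod_cast h₁) M.cast_nonneg,
    div_le_div_of_nonneg_right (by exact_mod_cast h₂) M.cast_nonneg⟩

lemma norm_sub_cellCorner_le {x : Fin m → ℝ} (hx : x ∈ lagCell k M qt) :
    ‖x - cellCorner k M qt‖ ≤ k / M := by
  refine (pi_norm_le_iff_of_nonneg (by positivity)).mpr fun i => ?_
  obtain ⟨h₁, h₂⟩ := hx i
  have hend : ((k * (qt i + 1) : ℕ) : ℝ) / M = ((k * qt i : ℕ) : ℝ) / M + k / M := by
    push_cast; ring
  rw [Pi.sub_apply, Real.norm_eq_abs, cellCorner, abs_of_nonneg (sub_nonneg.mpr h₁)]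
  linarith

lemma lagCell_subset_unitCube (hM : ∀ i, k * (qt i + 1) ≤ M) {x : Fin m → ℝ}
    (hx : x ∈ lagCell k M qt) : ∀ i, x i ∈ Set.Icc (0 : ℝ) 1 := fun i =>
  ⟨(by positivity : (0 : ℝ) ≤ _).trans (hx i).1,
    (hx i).2.trans (div_le_one_of_le₀ (by exact_mod_cast hM i) M.cast_nonneg)⟩

end Cell

lemma abs_lagrange_factor_le {k M q a j : ℕ} (hM : 0 < M) {t : ℝ}
    (ht : t ∈ Set.Icc (((k * q : ℕ) : ℝ) / M) (((k * (q + 1) : ℕ) : ℝ) / M))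
    (hj : j ≤ k) (hne : a ≠ k * q + j) :
    |(t - ((k * q + j : ℕ) : ℝ) / M) / ((a : ℝ) / M - ((k * q + j : ℕ) : ℝ) / M)| ≤ k := by
  have hMR : (0 : ℝ) < M := by exact_mod_cast hM
  obtain ⟨h₁, h₂⟩ := ht
  rw [div_le_iff₀ hMR, le_div_iff₀ hMR] at *
  have hjR : (j : ℝ) ≤ k := by exact_mod_cast hj
  have hnum : |t * M - ((k * q + j : ℕ) : ℝ)| ≤ k := by
    push_cast at h₁ h₂ ⊢
    rw [abs_le]
    constructor <;> nlinarith [j.cast_nonneg (α := ℝ)]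
  have hden : 1 ≤ |(a : ℝ) - ((k * q + j : ℕ) : ℝ)| := by
    have := Int.one_le_abs (sub_ne_zero.mpr (Int.ofNat_inj.not.mpr hne))
    exact_mod_cast this
  have hrw : (t - ((k * q + j : ℕ) : ℝ) / M) / ((a : ℝ) / M - ((k * q + j : ℕ) : ℝ) / M)
      = (t * M - ((k * q + j : ℕ) : ℝ)) / ((a : ℝ) - ((k * q + j : ℕ) : ℝ)) := by
    field_simp
  rw [hrw, abs_div]
  calc _ ≤ (k : ℝ) / 1 := div_le_div₀ (by positivity) hnum one_pos hden
    _ = k := div_one _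

lemma abs_prod_lagrange_factors_le {k M q a : ℕ} (hM : 0 < M) {t : ℝ}
    (ht : t ∈ Set.Icc (((k * q : ℕ) : ℝ) / M) (((k * (q + 1) : ℕ) : ℝ) / M))
    (ha : a ∈ Finset.Icc (k * q) (k * (q + 1))) :
    |∏ j ∈ (range (k + 1)).filter (fun j => j ≠ a - k * q),
        (t - ((k * q + j : ℕ) : ℝ) / M) / ((a : ℝ) / M - ((k * q + j : ℕ) : ℝ) / M)| ≤
      (k : ℝ) ^ k := by
  obtain ⟨ha₁, ha₂⟩ := Finset.mem_Icc.mp ha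
  have hcard : #((range (k + 1)).filter (fun j => j ≠ a - k * q)) = k := by
    rw [filter_ne', card_erase_of_mem (mem_range.mpr (by rw [Nat.mul_succ] at ha₂; omega)),
      card_range, Nat.add_sub_cancel]
  rw [abs_prod]
  refine (prod_le_prod (fun _ _ => abs_nonneg _) fun j hj => (?_ : _ ≤ (k : ℝ))).trans_eq
    (by rw [prod_const, hcard])
  obtain ⟨hj, hne⟩ := mem_filter.mp hj
  exact abs_lagrange_factor_le hM ht (Nat.lt_succ_iff.mp (mem_range.mp hj)) (by omega)

lemma abs_lagQ_le {m k M : ℕ} {qt aa : Fin m → ℕ} {x : Fin m → ℝ} (hM : 0 < M)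
    (hx : x ∈ lagCell k M qt) (ha : aa ∈ lagNodes k qt) :
    |lagQ m k M qt aa x| ≤ (k : ℝ) ^ (m * k) := by
  rw [lagQ, abs_prod]
  refine (prod_le_prod (fun _ _ => abs_nonneg _) fun i _ =>
    abs_prod_lagrange_factors_le hM (hx i) (Fintype.mem_piFinset.mp ha i)).trans_eq ?_
  rw [prod_const, card_univ, Fintype.card_fin, ← pow_mul, mul_comm]

lemma interpolation_constant_le {k d : ℕ} (hk : 1 ≤ k) (hd : 1 ≤ d) {α : ℝ}
    (hα : α ≤ k + 1) :
    (((k : ℝ) + 1) ^ (d - 1) * (k : ℝ) ^ ((d - 1) * k) + 1) * (k : ℝ) ^ α ≤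
      2 * ((k + 1 : ℕ) : ℝ) ^ (d * (k + 1)) := by
  obtain ⟨m, rfl⟩ : ∃ m, d = m + 1 := ⟨d - 1, by omega⟩
  have hkR : (1 : ℝ) ≤ k := by exact_mod_cast hk
  have hrpow : (k : ℝ) ^ α ≤ ((k : ℝ) + 1) ^ (k + 1) :=
    calc (k : ℝ) ^ α ≤ (k : ℝ) ^ ((k + 1 : ℕ) : ℝ) :=
          Real.rpow_le_rpow_of_exponent_le hkR (by push_cast; exact hα)
      _ = (k : ℝ) ^ (k + 1) := Real.rpow_natCast _ _
      _ ≤ ((k : ℝ) + 1) ^ (k + 1) := by gcongr; linarith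
  have hone : (1 : ℝ) ≤ ((k : ℝ) + 1) ^ (m + m * k) := one_le_pow₀ (by linarith)
  have hpow : (k : ℝ) ^ (m * k) ≤ ((k : ℝ) + 1) ^ (m * k) := by gcongr; linarith
  rw [Nat.add_sub_cancel]
  calc (((k : ℝ) + 1) ^ m * (k : ℝ) ^ (m * k) + 1) * (k : ℝ) ^ α
      ≤ (((k : ℝ) + 1) ^ m * ((k : ℝ) + 1) ^ (m * k) + ((k : ℝ) + 1) ^ (m + m * k)) *
          ((k : ℝ) + 1) ^ (k + 1) := by gcongr
    _ = 2 * ((k + 1 : ℕ) : ℝ) ^ ((m + 1) * (k + 1)) := by push_cast; ring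

/-- Approximation error of exact-value tensor-product Lagrange interpolation of a
function `g* ∈ Σ(λ, α)` on the cell `I_{q̃}`:
`|P_{q̃}(x̃) − g*(x̃)| ≤ 2⌈α⌉^{d⌈α⌉} λ M^{−α}`.  The hypothesis `hrepro` records
that the Lagrange interpolation reproduces polynomials of degree `⌊α⌋`, in
particular the Taylor polynomial of `g*` at the cell corner. -/
theorem lagrange_approximation_error (d l M : ℕ) (hd : 2 ≤ d) (α lam : ℝ)
    (hα : 1 < α) (hlam : 1 ≤ lam) (hM : M = flr α * 2 ^ l)
    (qt : Fin (d - 1) → ℕ) (hqt : ∀ i, qt i ≤ 2 ^ l - 1)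
    (gstar : (Fin (d - 1) → ℝ) → ℝ)
    (TP : (Fin (d - 1) → ℝ) → ℕ → (Fin (d - 1) → ℝ) → ℝ)
    (hg : MemHolderSigma (d - 1) lam α gstar TP)
    (hrepro : ∀ x : Fin (d - 1) → ℝ,
      (∀ i, x i ∈ Set.Icc (((flr α * qt i : ℕ) : ℝ) / M)
          (((flr α * (qt i + 1) : ℕ) : ℝ) / M)) →
      (∑ aa ∈ Fintype.piFinset (fun i => Finset.Icc (flr α * qt i) (flr α * (qt i + 1))),
          TP (fun i => ((flr α * qt i : ℕ) : ℝ) / M) (flr α) (fun i => (aa i : ℝ) / M) *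
            lagQ (d - 1) (flr α) M qt aa x)
        = TP (fun i => ((flr α * qt i : ℕ) : ℝ) / M) (flr α) x) :
    ∀ x : Fin (d - 1) → ℝ,
      (∀ i, x i ∈ Set.Icc (((flr α * qt i : ℕ) : ℝ) / M)
          (((flr α * (qt i + 1) : ℕ) : ℝ) / M)) →
      |(∑ aa ∈ Fintype.piFinset (fun i => Finset.Icc (flr α * qt i) (flr α * (qt i + 1))),
            gstar (fun i => (aa i : ℝ) / M) * lagQ (d - 1) (flr α) M qt aa x) -
          gstar x|
        ≤ 2 * (⌈α⌉₊ : ℝ) ^ (d * ⌈α⌉₊) * lam * (M : ℝ) ^ (-α) := by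
  intro x hx
  have hk : 1 ≤ flr α := one_le_flr hα
  have hMpos : 0 < M := hM ▸ Nat.mul_pos hk (Nat.two_pow_pos l)
  have hcube : ∀ i, flr α * (qt i + 1) ≤ M := fun i => by
    have := hqt i
    have := Nat.one_le_two_pow (n := l)
    exact hM ▸ Nat.mul_le_mul_left _ (by omega)
  have hTaylor : ∀ z ∈ lagCell (flr α) M qt,
      |gstar z - TP (cellCorner (flr α) M qt) (flr α) z| ≤ lam * ((flr α : ℝ) / M) ^ α :=
    fun z hz => hg.abs_sub_taylor_le (by linarith) (by linarith)
      (lagCell_subset_unitCube hcube hz) (lagCell_subset_unitCube hcube cellCorner_mem_lagCell)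
      (norm_sub_cellCorner_le hz)
  have herr := abs_interpolation_sub_le (lagNodes (flr α) qt) (fun aa i => (aa i : ℝ) / M)
    (fun aa => lagQ (d - 1) (flr α) M qt aa x) gstar (TP (cellCorner (flr α) M qt) (flr α)) x
    (hrepro x hx) (fun _ ha => hTaylor _ (node_mem_lagCell ha)) (hTaylor x hx)
    (fun _ ha => abs_lagQ_le hMpos hx ha)
  have hscale : ((flr α : ℝ) / M) ^ α = (flr α : ℝ) ^ α * (M : ℝ) ^ (-α) := by
    rw [Real.div_rpow (by positivity) M.cast_nonneg, Real.rpow_neg M.cast_nonneg, div_eq_mul_inv]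
  rw [card_lagNodes, hscale] at herr
  rw [← flr_add_one (by linarith)]
  calc _ ≤ _ := herr
    _ = ((((flr α : ℝ) + 1) ^ (d - 1) * (flr α : ℝ) ^ ((d - 1) * flr α) + 1) * (flr α : ℝ) ^ α) *
          (lam * (M : ℝ) ^ (-α)) := by push_cast; ring
    _ ≤ 2 * ((flr α + 1 : ℕ) : ℝ) ^ (d * (flr α + 1)) * (lam * (M : ℝ) ^ (-α)) :=
        mul_le_mul_of_nonneg_right (interpolation_constant_le hk (by omega) (le_flr_add_one α))
          (mul_nonneg (by linarith) (by positivity))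
    _ = _ := by ring
end

section
/- Correctness of aggregation: fix an index i* and suppose we are given pairs of sets (S⁰_i, S¹_i) for i = 1,…,m such that for every i ≤ i*, {x : x_d − g*(x̃) > Δ_i} ⊆ S¹_i ⊆ {x : x_d > g*(x̃)} and {x : g*(x̃) − x_d > Δ_i} ⊆ S⁰_i ⊆ {x : x_d < g*(x̃)}. Define recursively s⁰_0 = s¹_0 = ∅ and s^y_i = s^y_{i−1} ∪ (S^y_i \ s^{1−y}_{i−1}) for i = 1,…,m and y ∈ {0,1}. Then s⁰_m ∩ s¹_m = ∅, and {x : x_d − g*(x̃) > Δ_{i*}} ⊆ s¹_m and {x : g*(x̃) − x_d > Δ_{i*}} ⊆ s⁰_m. -/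
/-- Correctness of aggregation: given subroutine outputs `(S⁰_i, S¹_i)` that are
correct with margin `Δ_i` for `i ≤ i*` (and merely disjoint for `i > i*`), the
aggregated sets `s^y_i` defined by `s^y_i = s^y_{i−1} ∪ (S^y_i \ s^{1−y}_{i−1})`
satisfy: `s⁰_m ∩ s¹_m = ∅`, `{x_d − g*(x̃) > Δ_{i*}} ⊆ s¹_m`, and
`{g*(x̃) − x_d > Δ_{i*}} ⊆ s⁰_m`. -/
theorem aggregation_correct (dm m istar : ℕ) (h1 : 1 ≤ istar) (him : istar ≤ m)
    (gstar : (Fin dm → ℝ) → ℝ)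
    (S0 S1 s0 s1 : ℕ → Set ((Fin dm → ℝ) × ℝ)) (Δ : ℕ → ℝ)
    (hΔpos : 0 < Δ istar)
    (hΔmono : ∀ i j, 1 ≤ i → i ≤ j → j ≤ istar → Δ j ≤ Δ i)
    (hS1 : ∀ i, 1 ≤ i → i ≤ istar →
      {x : (Fin dm → ℝ) × ℝ | x.2 - gstar x.1 > Δ i} ⊆ S1 i ∧
        S1 i ⊆ {x : (Fin dm → ℝ) × ℝ | gstar x.1 < x.2})
    (hS0 : ∀ i, 1 ≤ i → i ≤ istar →
      {x : (Fin dm → ℝ) × ℝ | gstar x.1 - x.2 > Δ i} ⊆ S0 i ∧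
        S0 i ⊆ {x : (Fin dm → ℝ) × ℝ | x.2 < gstar x.1})
    (hdisj : ∀ i, 1 ≤ i → i ≤ m → S0 i ∩ S1 i = ∅)
    (hs00 : s0 0 = ∅) (hs10 : s1 0 = ∅)
    (hrec0 : ∀ i : ℕ, s0 (i + 1) = s0 i ∪ (S0 (i + 1) \ s1 i))
    (hrec1 : ∀ i : ℕ, s1 (i + 1) = s1 i ∪ (S1 (i + 1) \ s0 i)) :
    s0 m ∩ s1 m = ∅ ∧
    {x : (Fin dm → ℝ) × ℝ | x.2 - gstar x.1 > Δ istar} ⊆ s1 m ∧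
    {x : (Fin dm → ℝ) × ℝ | gstar x.1 - x.2 > Δ istar} ⊆ s0 m := by

  have hdis : ∀ n, n ≤ m → s0 n ∩ s1 n = ∅ := by
    intro n
    induction n with
    | zero => intro _; simp [hs00]
    | succ k ih =>
      intro hk
      have ihk := ih (le_of_lt (Nat.lt_of_succ_le hk))
      have hd := hdisj (k+1) (Nat.succ_le_succ (Nat.zero_le k)) hk
      rw [hrec0, hrec1]
      ext x
      simp only [Set.mem_inter_iff, Set.mem_union, Set.mem_diff,
        Set.mem_empty_iff_false, iff_false]
      rintro ⟨h0, h1⟩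
      rcases h0 with h0 | ⟨hS0x, hns1⟩
      · rcases h1 with h1 | ⟨hS1x, hns0⟩
        · have : x ∈ s0 k ∩ s1 k := ⟨h0, h1⟩
          rw [ihk] at this; exact this
        · exact hns0 h0
      · rcases h1 with h1 | ⟨hS1x, hns0⟩
        · exact hns1 h1
        · have : x ∈ S0 (k+1) ∩ S1 (k+1) := ⟨hS0x, hS1x⟩
          rw [hd] at this; exact this
  have hbelow : ∀ n, n ≤ istar → s0 n ⊆ {x | x.2 < gstar x.1} := by
    intro n
    induction n with
    | zero => intro _; rw [hs00]; exact Set.empty_subset _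
    | succ k ih =>
      intro hk
      rw [hrec0]
      intro x hx
      rcases hx with hx | ⟨hx, _⟩
      · exact ih (le_of_lt (Nat.lt_of_succ_le hk)) hx
      · exact (hS0 (k+1) (Nat.succ_le_succ (Nat.zero_le k)) hk).2 hx
  have habove : ∀ n, n ≤ istar → s1 n ⊆ {x | gstar x.1 < x.2} := by
    intro n
    induction n with
    | zero => intro _; rw [hs10]; exact Set.empty_subset _
    | succ k ih =>
      intro hk
      rw [hrec1]
      intro x hx
      rcases hx with hx | ⟨hx, _⟩
      · exact ih (le_of_lt (Nat.lt_of_succ_le hk)) hx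
      · exact (hS1 (k+1) (Nat.succ_le_succ (Nat.zero_le k)) hk).2 hx
  have hm0 : ∀ i j, i ≤ j → s0 i ⊆ s0 j := by
    intro i j hij
    induction j with
    | zero => rw [Nat.le_zero.mp hij]
    | succ k ih =>
      rcases Nat.lt_or_ge i (k+1) with h | h
      · exact (ih (Nat.lt_succ_iff.mp h)).trans
          (by rw [hrec0]; exact Set.subset_union_left)
      · rw [Nat.le_antisymm hij h]
  have hm1 : ∀ i j, i ≤ j → s1 i ⊆ s1 j := by
    intro i j hij
    induction j with
    | zero => rw [Nat.le_zero.mp hij]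
    | succ k ih =>
      rcases Nat.lt_or_ge i (k+1) with h | h
      · exact (ih (Nat.lt_succ_iff.mp h)).trans
          (by rw [hrec1]; exact Set.subset_union_left)
      · rw [Nat.le_antisymm hij h]
  have heq : istar - 1 + 1 = istar := Nat.succ_pred_eq_of_pos h1
  refine ⟨hdis m le_rfl, ?_, ?_⟩
  · intro x hx
    have hx1 : x ∈ S1 istar := (hS1 istar h1 le_rfl).1 hx
    have hx0 : x ∉ s0 (istar - 1) := by
      intro h
      have h2 := hbelow (istar - 1) (Nat.sub_le _ _) h
      simp only [Set.mem_setOf_eq] at h2 hx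
      linarith
    refine hm1 istar m him ?_
    rw [← heq, hrec1]
    right
    rw [heq]
    exact ⟨hx1, hx0⟩
  · intro x hx
    have hx1 : x ∈ S0 istar := (hS0 istar h1 le_rfl).1 hx
    have hx0 : x ∉ s1 (istar - 1) := by
      intro h
      have h2 := habove (istar - 1) (Nat.sub_le _ _) h
      simp only [Set.mem_setOf_eq] at h2 hx
      linarith
    refine hm0 istar m him ?_
    rw [← heq, hrec0]
    right
    rw [heq]
    exact ⟨hx1, hx0⟩
end

section
/- In the aggregation of the previous statement, additionally the sets s^y_m are weakly correct: misclassification is confined to the margin region, i.e. s¹_m ∩ {x : g*(x̃) − x_d > Δ_{i*}} = ∅ and s⁰_m ∩ {x : x_d − g*(x̃) > Δ_{i*}} = ∅. -/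
/-- Weak correctness of aggregation: misclassification by the aggregated sets is
confined to the margin region: `s¹_m ∩ {g*(x̃) − x_d > Δ_{i*}} = ∅` and
`s⁰_m ∩ {x_d − g*(x̃) > Δ_{i*}} = ∅`. -/
theorem aggregation_weakly_correct (dm m istar : ℕ) (h1 : 1 ≤ istar) (him : istar ≤ m)
    (gstar : (Fin dm → ℝ) → ℝ)
    (S0 S1 s0 s1 : ℕ → Set ((Fin dm → ℝ) × ℝ)) (Δ : ℕ → ℝ)
    (hΔpos : 0 < Δ istar)
    (hΔmono : ∀ i j, 1 ≤ i → i ≤ j → j ≤ istar → Δ j ≤ Δ i)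
    (hS1 : ∀ i, 1 ≤ i → i ≤ istar →
      {x : (Fin dm → ℝ) × ℝ | x.2 - gstar x.1 > Δ i} ⊆ S1 i ∧
        S1 i ⊆ {x : (Fin dm → ℝ) × ℝ | gstar x.1 < x.2})
    (hS0 : ∀ i, 1 ≤ i → i ≤ istar →
      {x : (Fin dm → ℝ) × ℝ | gstar x.1 - x.2 > Δ i} ⊆ S0 i ∧
        S0 i ⊆ {x : (Fin dm → ℝ) × ℝ | x.2 < gstar x.1})
    (hdisj : ∀ i, 1 ≤ i → i ≤ m → S0 i ∩ S1 i = ∅)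
    (hs00 : s0 0 = ∅) (hs10 : s1 0 = ∅)
    (hrec0 : ∀ i : ℕ, s0 (i + 1) = s0 i ∪ (S0 (i + 1) \ s1 i))
    (hrec1 : ∀ i : ℕ, s1 (i + 1) = s1 i ∪ (S1 (i + 1) \ s0 i)) :
    s1 m ∩ {x : (Fin dm → ℝ) × ℝ | gstar x.1 - x.2 > Δ istar} = ∅ ∧
    s0 m ∩ {x : (Fin dm → ℝ) × ℝ | x.2 - gstar x.1 > Δ istar} = ∅ := by
  -- monotonicity of s0, s1
  have mono0 : ∀ i j, i ≤ j → s0 i ⊆ s0 j := by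
    intro i j hij
    induction j, hij using Nat.le_induction with
    | base => exact subset_rfl
    | succ j hij ih => rw [hrec0 j]; exact ih.trans Set.subset_union_left
  have mono1 : ∀ i j, i ≤ j → s1 i ⊆ s1 j := by
    intro i j hij
    induction j, hij using Nat.le_induction with
    | base => exact subset_rfl
    | succ j hij ih => rw [hrec1 j]; exact ih.trans Set.subset_union_left
  -- for j ≤ istar, s0 j below graph, s1 j above graph
  have hsub : ∀ j, j ≤ istar →
      s0 j ⊆ {x : (Fin dm → ℝ) × ℝ | x.2 < gstar x.1} ∧
      s1 j ⊆ {x : (Fin dm → ℝ) × ℝ | gstar x.1 < x.2} := by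
    intro j
    induction j with
    | zero => intro _; rw [hs00, hs10]; exact ⟨Set.empty_subset _, Set.empty_subset _⟩
    | succ j ih =>
      intro hj
      have hj' : j ≤ istar := Nat.le_of_succ_le hj
      constructor
      · rw [hrec0 j]
        exact Set.union_subset (ih hj').1
          ((Set.diff_subset).trans (hS0 (j+1) (Nat.succ_le_succ (Nat.zero_le _)) hj).2)
      · rw [hrec1 j]
        exact Set.union_subset (ih hj').2
          ((Set.diff_subset).trans (hS1 (j+1) (Nat.succ_le_succ (Nat.zero_le _)) hj).2)
  -- membership decomposition
  have hmem0 : ∀ n x, x ∈ s0 n → ∃ i, i < n ∧ x ∈ S0 (i+1) ∧ x ∉ s1 i := by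
    intro n
    induction n with
    | zero => intro x hx; rw [hs00] at hx; exact absurd hx (Set.notMem_empty x)
    | succ n ih =>
      intro x hx
      rw [hrec0 n] at hx
      rcases hx with hx | hx
      · obtain ⟨i, hi, h⟩ := ih x hx
        exact ⟨i, Nat.lt_succ_of_lt hi, h⟩
      · exact ⟨n, Nat.lt_succ_self n, hx.1, hx.2⟩
  have hmem1 : ∀ n x, x ∈ s1 n → ∃ i, i < n ∧ x ∈ S1 (i+1) ∧ x ∉ s0 i := by
    intro n
    induction n with
    | zero => intro x hx; rw [hs10] at hx; exact absurd hx (Set.notMem_empty x)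
    | succ n ih =>
      intro x hx
      rw [hrec1 n] at hx
      rcases hx with hx | hx
      · obtain ⟨i, hi, h⟩ := ih x hx
        exact ⟨i, Nat.lt_succ_of_lt hi, h⟩
      · exact ⟨n, Nat.lt_succ_self n, hx.1, hx.2⟩
  have histar : istar - 1 + 1 = istar := Nat.succ_pred_eq_of_pos h1
  -- key inclusions
  have key0 : {x : (Fin dm → ℝ) × ℝ | gstar x.1 - x.2 > Δ istar} ⊆ s0 istar := by
    intro x hx
    have hxlt : x.2 < gstar x.1 := by have := hx; simp only [Set.mem_setOf_eq] at this; linarith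
    have hxS : x ∈ S0 istar := (hS0 istar h1 le_rfl).1 hx
    have hxns : x ∉ s1 (istar - 1) := fun h =>
      absurd ((hsub (istar - 1) (Nat.sub_le _ _)).2 h) (by simp only [Set.mem_setOf_eq]; linarith)
    rw [← histar, hrec0 (istar - 1)]
    exact Or.inr ⟨by rw [histar]; exact hxS, hxns⟩
  have key1 : {x : (Fin dm → ℝ) × ℝ | x.2 - gstar x.1 > Δ istar} ⊆ s1 istar := by
    intro x hx
    have hxlt : gstar x.1 < x.2 := by have := hx; simp only [Set.mem_setOf_eq] at this; linarith
    have hxS : x ∈ S1 istar := (hS1 istar h1 le_rfl).1 hx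
    have hxns : x ∉ s0 (istar - 1) := fun h =>
      absurd ((hsub (istar - 1) (Nat.sub_le _ _)).1 h) (by simp only [Set.mem_setOf_eq]; linarith)
    rw [← histar, hrec1 (istar - 1)]
    exact Or.inr ⟨by rw [histar]; exact hxS, hxns⟩
  constructor
  · rw [Set.eq_empty_iff_forall_notMem]
    rintro x ⟨hx1, hx2⟩
    simp only [Set.mem_setOf_eq] at hx2
    obtain ⟨i, hi, hxS, hxns⟩ := hmem1 m x hx1
    by_cases hcase : i + 1 ≤ istar
    · have := (hS1 (i+1) (Nat.succ_le_succ (Nat.zero_le _)) hcase).2 hxS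
      simp only [Set.mem_setOf_eq] at this; linarith
    · have hle : istar ≤ i := by omega
      exact hxns (mono0 istar i hle (key0 hx2))
  · rw [Set.eq_empty_iff_forall_notMem]
    rintro x ⟨hx1, hx2⟩
    simp only [Set.mem_setOf_eq] at hx2
    obtain ⟨i, hi, hxS, hxns⟩ := hmem0 m x hx1
    by_cases hcase : i + 1 ≤ istar
    · have := (hS0 (i+1) (Nat.succ_le_succ (Nat.zero_le _)) hcase).2 hxS
      simp only [Set.mem_setOf_eq] at this; linarith
    · have hle : istar ≤ i := by omega
      exact hxns (mono1 istar i hle (key1 hx2))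
end
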